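/- Let A be a complex Banach algebra and let σ, τ be bounded algebra endomorphisms of A. Then A is approximately (σ-τ)-amenable if and only if A is (σ-τ)-amenable. Here (σ-τ)-amenability means: for every Banach A-bimodule X, every bounded (σ-τ)-derivation d : A → X* into the dual bimodule X* is (σ-τ)-inner; and approximate (σ-τ)-amenability means: for every Banach A-bimodule X and every approximate (σ-τ)-derivation f : A → X* there exist β > 0 and x ∈ X* such that ‖xσ(a) − τ(a)x − f(a)‖ ≤ β for all a ∈ A. -/

import Mathlib

open Filter Topology

/-- A Banach bimodule over a complex Banach algebra `A`:
a complex Banach space `X` with continuous bilinear left and right actions of `A`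
which are associative and commute with each other (`a (x b) = (a x) b`). -/
structure BanachBimodule (A : Type*) [NonUnitalNormedRing A] [NormedSpace ℂ A]
    (X : Type*) [NormedAddCommGroup X] [NormedSpace ℂ X] [CompleteSpace X] where
  lsmul : A →L[ℂ] X →L[ℂ] X
  rsmul : A →L[ℂ] X →L[ℂ] X
  lsmul_mul : ∀ (a b : A) (x : X), lsmul (a * b) x = lsmul a (lsmul b x)
  rsmul_mul : ∀ (a b : A) (x : X), rsmul (a * b) x = rsmul b (rsmul a x)
  middle : ∀ (a b : A) (x : X), lsmul a (rsmul b x) = rsmul b (lsmul a x)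

/-- The dual Banach `A`-bimodule structure on `X* = X →L[ℂ] ℂ`, with the actions
`(a·φ)(x) = φ(x·a)` and `(φ·a)(x) = φ(a·x)`. -/
noncomputable def BanachBimodule.dual {A : Type*} [NonUnitalNormedRing A]
    [NormedSpace ℂ A] {X : Type*} [NormedAddCommGroup X] [NormedSpace ℂ X]
    [CompleteSpace X] (M : BanachBimodule A X) :
    BanachBimodule A (X →L[ℂ] ℂ) where
  lsmul := ((ContinuousLinearMap.compL ℂ X X ℂ).flip).comp M.rsmul
  rsmul := ((ContinuousLinearMap.compL ℂ X X ℂ).flip).comp M.lsmul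
  lsmul_mul := by
    intro a b φ
    ext x
    simp [M.rsmul_mul]
  rsmul_mul := by
    intro a b φ
    ext x
    simp [M.lsmul_mul]
  middle := by
    intro a b φ
    ext x
    simp [M.middle]

/-- `f : A → X` is an approximate `(σ-τ)`-derivation: `f 0 = 0`, `f` is continuous at
some point, and for some `α > 0` it is approximately `T`-additive and approximately
satisfies the `(σ-τ)`-derivation identity, within `α`. -/
def IsApproxSigmaTauDerivation {A : Type*} [NonUnitalNormedRing A] [NormedSpace ℂ A]
    {X : Type*} [NormedAddCommGroup X] [NormedSpace ℂ X] [CompleteSpace X]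
    (M : BanachBimodule A X) (σ τ : A →L[ℂ] A) (f : A → X) : Prop :=
  f 0 = 0 ∧ (∃ a₀ : A, ContinuousAt f a₀) ∧
    ∃ α : ℝ, 0 < α ∧
      (∀ l : ℂ, ‖l‖ = 1 → ∀ a b : A,
        ‖f (l • a + l • b) - l • f a - l • f b‖ ≤ α) ∧
      (∀ a b : A, ‖f (a * b) - M.rsmul (σ b) (f a) - M.lsmul (τ a) (f b)‖ ≤ α)

/-!
By the Hyers–Ulam–Park stability theorem, an approximate `(σ-τ)`-derivation `f` lies within
bounded distance of the continuous `ℂ`-linear map `D a = lim 2⁻ⁿ f (2ⁿ a)`: additivity and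
`𝕋`-homogeneity pass to the limit, continuity of `f` at one point makes `D` continuous, and a
continuous additive `𝕋`-homogeneous map is `ℂ`-linear. The derivation defect of `D` is
bounded by an affine function of `n` along `(n a, n b)` but scales like `n²`, so it vanishes.
Conversely, an inner derivation within bounded distance of a linear map `d` equals `d`, since
their difference is additive and bounded.
-/

open Metric

lemma nonpos_of_forall_nat_mul_le {x C : ℝ} (h : ∀ n : ℕ, 0 < n → n * x ≤ C) : x ≤ 0 := by
  by_contra! hx
  have hC : 0 < C := by simpa using hx.trans_le (by simpa using h 1 one_pos)
  obtain ⟨n, hn⟩ := exists_nat_gt (C / x)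
  have hn0 : (0 : ℝ) < n := (div_pos hC hx).trans hn
  linarith [(div_lt_iff₀ hx).1 hn, h n (by exact_mod_cast hn0)]

lemma eq_of_forall_norm_sub_le {E Y F : Type*} [AddCommGroup E] [NormedAddCommGroup Y]
    [NormedSpace ℝ Y] [FunLike F E Y] [AddMonoidHomClass F E Y] {f g : F} {C : ℝ}
    (h : ∀ x, ‖f x - g x‖ ≤ C) : f = g := by
  refine DFunLike.ext _ _ fun x => sub_eq_zero.1 <| norm_le_zero_iff.1 <|
    nonpos_of_forall_nat_mul_le (C := C) fun n _ => ?_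
  simpa [← nsmul_eq_mul, ← RCLike.norm_nsmul ℝ, ← smul_sub, map_nsmul] using h (n • x)

noncomputable section HyersUlam

variable {G Y : Type*} [AddCommGroup G] [NormedAddCommGroup Y] [NormedSpace ℝ Y]
  {f : G → Y} {α : ℝ}

def hyersUlamSeq (f : G → Y) (a : G) (n : ℕ) : Y :=
  (2 ^ n : ℝ)⁻¹ • f (2 ^ n • a)

def hyersUlamLimit (f : G → Y) (a : G) : Y :=
  limUnder atTop (hyersUlamSeq f a)

lemma norm_inv_two_pow_smul_le {y : Y} (hy : ‖y‖ ≤ α) (n : ℕ) :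
    ‖(2 ^ n : ℝ)⁻¹ • y‖ ≤ α / 2 ^ n := by
  rw [norm_smul, norm_inv, norm_pow, Real.norm_two, inv_mul_eq_div]
  gcongr

lemma tendsto_inv_two_pow_smul_zero {z : ℕ → Y} (hz : ∀ n, ‖z n‖ ≤ α) :
    Tendsto (fun n => (2 ^ n : ℝ)⁻¹ • z n) atTop (𝓝 0) := by
  refine squeeze_zero_norm (fun n => norm_inv_two_pow_smul_le (hz n) n) ?_
  simpa [div_eq_mul_inv] using (tendsto_inv_atTop_zero.comp
    (tendsto_pow_atTop_atTop_of_one_lt one_lt_two)).const_mul α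

lemma dist_hyersUlamSeq_succ_le (hf : ∀ a b, ‖f (a + b) - f a - f b‖ ≤ α) (a : G) (n : ℕ) :
    dist (hyersUlamSeq f a n) (hyersUlamSeq f a (n + 1)) ≤ α / 2 / 2 ^ n := by
  set x := 2 ^ n • a
  have hx : 2 ^ (n + 1) • a = x + x := by rw [pow_succ, mul_nsmul, two_nsmul]
  have key : hyersUlamSeq f a n - hyersUlamSeq f a (n + 1) =
      -((2 ^ (n + 1) : ℝ)⁻¹ • (f (x + x) - f x - f x)) := by
    simp only [hyersUlamSeq, hx]
    match_scalars <;> field_simp; ring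
  rw [dist_eq_norm, key, norm_neg, div_div, ← pow_succ']
  exact norm_inv_two_pow_smul_le (hf x x) _

variable [CompleteSpace Y]

lemma tendsto_hyersUlamSeq (hf : ∀ a b, ‖f (a + b) - f a - f b‖ ≤ α) (a : G) :
    Tendsto (hyersUlamSeq f a) atTop (𝓝 (hyersUlamLimit f a)) :=
  (cauchySeq_of_le_geometric_two (dist_hyersUlamSeq_succ_le hf a)).tendsto_limUnder

lemma norm_hyersUlamLimit_sub_le (hf : ∀ a b, ‖f (a + b) - f a - f b‖ ≤ α) (a : G) :
    ‖hyersUlamLimit f a - f a‖ ≤ α := by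
  have h := dist_le_of_le_geometric_two_of_tendsto₀ (dist_hyersUlamSeq_succ_le hf a)
    (tendsto_hyersUlamSeq hf a)
  rwa [hyersUlamSeq, pow_zero, inv_one, one_smul, pow_zero, one_smul, dist_comm,
    dist_eq_norm] at h

lemma hyersUlamLimit_add (hf : ∀ a b, ‖f (a + b) - f a - f b‖ ≤ α) (a b : G) :
    hyersUlamLimit f (a + b) = hyersUlamLimit f a + hyersUlamLimit f b := by
  have hlim := ((tendsto_hyersUlamSeq hf (a + b)).sub (tendsto_hyersUlamSeq hf a)).sub
    (tendsto_hyersUlamSeq hf b)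
  simp only [hyersUlamSeq, ← smul_sub, smul_add] at hlim
  rw [← sub_eq_zero, ← sub_sub]
  exact tendsto_nhds_unique hlim (tendsto_inv_two_pow_smul_zero fun n => hf _ _)

end HyersUlam

lemma hyersUlamLimit_smul {G Y : Type*} [AddCommGroup G] [Module ℂ G] [NormedAddCommGroup Y]
    [NormedSpace ℂ Y] [CompleteSpace Y] {f : G → Y} {α β : ℝ}
    (hf : ∀ a b, ‖f (a + b) - f a - f b‖ ≤ α)
    {c : ℂ} (hc : ∀ a, ‖f (c • a) - c • f a‖ ≤ β) (a : G) :
    hyersUlamLimit f (c • a) = c • hyersUlamLimit f a := by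
  have hlim := (tendsto_hyersUlamSeq hf (c • a)).sub ((tendsto_hyersUlamSeq hf a).const_smul c)
  simp only [hyersUlamSeq, smul_comm (2 ^ _ : ℕ) c a, smul_comm c ((2 : ℝ) ^ _)⁻¹,
    ← smul_sub] at hlim
  rw [← sub_eq_zero]
  exact tendsto_nhds_unique hlim (tendsto_inv_two_pow_smul_zero fun n => hc _)

lemma AddMonoidHom.continuous_of_norm_sub_le_of_continuousAt {G H : Type*}
    [SeminormedAddCommGroup G] [SeminormedAddCommGroup H] [NormedSpace ℝ H] (D : G →+ H)
    {f : G → H} {a₀ : G} {α : ℝ} (hf : ContinuousAt f a₀) (hD : ∀ a, ‖D a - f a‖ ≤ α) :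
    Continuous D := by
  have hnhds : (a₀ + ·) ⁻¹' (f ⁻¹' ball (f a₀) 1) ∈ 𝓝 (0 : G) :=
    (continuous_const_add a₀).continuousAt.preimage_mem_nhds
      (by simpa using hf.preimage_mem_nhds (ball_mem_nhds _ one_pos))
  refine D.continuous_of_isBounded_nhds_zero hnhds <|
    isBounded_iff_forall_norm_le.2 ⟨α + (‖f a₀‖ + 1) + ‖D a₀‖, ?_⟩
  rintro _ ⟨h, hh, rfl⟩
  have hfh : ‖f (a₀ + h)‖ ≤ ‖f a₀‖ + 1 := by
    have hclose : ‖f (a₀ + h) - f a₀‖ < 1 := by simpa [dist_eq_norm] using hh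
    linarith [norm_le_norm_add_norm_sub' (f (a₀ + h)) (f a₀)]
  calc ‖D h‖ = ‖(D (a₀ + h) - f (a₀ + h)) + f (a₀ + h) - D a₀‖ := by simp
    _ ≤ α + (‖f a₀‖ + 1) + ‖D a₀‖ :=
      (norm_sub_le _ _).trans (by gcongr; exact (norm_add_le _ _).trans (add_le_add (hD _) hfh))

lemma map_complex_smul_of_map_real_smul {E F : Type*} [AddCommGroup E] [Module ℂ E]
    [AddCommGroup F] [Module ℂ F] {D : E → F} (hreal : ∀ (r : ℝ) x, D (r • x) = r • D x)
    (hunit : ∀ l : ℂ, ‖l‖ = 1 → ∀ x, D (l • x) = l • D x) (c : ℂ) (x : E) :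
    D (c • x) = c • D x := by
  rw [← c.norm_mul_exp_arg_mul_I, mul_smul, mul_smul, Complex.coe_smul, Complex.coe_smul, hreal,
    hunit _ (Complex.norm_exp_ofReal_mul_I _)]

theorem exists_continuousLinearMap_norm_sub_le {E F : Type*} [NormedAddCommGroup E]
    [NormedSpace ℂ E] [NormedAddCommGroup F] [NormedSpace ℂ F] [CompleteSpace F] {f : E → F}
    {a₀ : E} {α : ℝ} (hf0 : f 0 = 0) (hcont : ContinuousAt f a₀)
    (hf : ∀ l : ℂ, ‖l‖ = 1 → ∀ a b, ‖f (l • a + l • b) - l • f a - l • f b‖ ≤ α) :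
    ∃ D : E →L[ℂ] F, ∀ a, ‖D a - f a‖ ≤ α := by
  have hadd : ∀ a b, ‖f (a + b) - f a - f b‖ ≤ α := by simpa using hf 1 (by simp)
  have hunit (l : ℂ) (hl : ‖l‖ = 1) (a : E) : ‖f (l • a) - l • f a‖ ≤ α := by
    simpa [hf0] using hf l hl a 0
  let D : E →+ F := AddMonoidHom.mk' (hyersUlamLimit f) (hyersUlamLimit_add hadd)
  have hD : ∀ a, ‖D a - f a‖ ≤ α := norm_hyersUlamLimit_sub_le hadd
  have hDcont : Continuous D := D.continuous_of_norm_sub_le_of_continuousAt hcont hD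
  refine ⟨⟨⟨D, map_complex_smul_of_map_real_smul (map_real_smul D hDcont)
    fun l hl => hyersUlamLimit_smul hadd (hunit l hl)⟩, hDcont⟩, hD⟩

namespace BanachBimodule

variable {A Y : Type*} [NonUnitalNormedRing A] [NormedSpace ℂ A] [NormedAddCommGroup Y]
  [NormedSpace ℂ Y] [CompleteSpace Y] (M : BanachBimodule A Y) (σ τ : A →L[ℂ] A)

noncomputable def sigmaTauDefect (f : A → Y) (a b : A) : Y :=
  f (a * b) - M.rsmul (σ b) (f a) - M.lsmul (τ a) (f b)

noncomputable def innerDerivation (x : Y) : A →L[ℂ] Y :=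
  (M.rsmul.flip x).comp σ - (M.lsmul.flip x).comp τ

@[simp]
lemma innerDerivation_apply (x : Y) (a : A) :
    M.innerDerivation σ τ x a = M.rsmul (σ a) x - M.lsmul (τ a) x := rfl

variable {M σ τ}

lemma sigmaTauDefect_eq_zero_iff {f : A → Y} {a b : A} :
    M.sigmaTauDefect σ τ f a b = 0 ↔ f (a * b) = M.rsmul (σ b) (f a) + M.lsmul (τ a) (f b) := by
  rw [sigmaTauDefect, sub_sub, sub_eq_zero]

lemma sigmaTauDefect_sub (f g : A → Y) (a b : A) :
    M.sigmaTauDefect σ τ (f - g) a b = M.sigmaTauDefect σ τ f a b - M.sigmaTauDefect σ τ g a b := by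
  simp only [sigmaTauDefect, Pi.sub_apply, map_sub]
  abel

lemma norm_sigmaTauDefect_le {g : A → Y} {β : ℝ} (hg : ∀ a, ‖g a‖ ≤ β) (a b : A) :
    ‖M.sigmaTauDefect σ τ g a b‖ ≤ β + ‖M.rsmul (σ b)‖ * β + ‖M.lsmul (τ a)‖ * β := by
  refine (norm_sub_le _ _).trans (add_le_add ((norm_sub_le _ _).trans (add_le_add (hg _) ?_)) ?_)
  all_goals exact ((ContinuousLinearMap.le_opNorm _ _).trans (by gcongr; exact hg _))

lemma sigmaTauDefect_nsmul {F : Type*} [FunLike F A Y] [AddMonoidHomClass F A Y] (D : F)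
    (n : ℕ) (a b : A) :
    M.sigmaTauDefect σ τ D (n • a) (n • b) = n • n • M.sigmaTauDefect σ τ D a b := by
  simp only [sigmaTauDefect, smul_mul_assoc, mul_smul_comm, map_nsmul,
    FunLike.coe_smul, Pi.smul_apply, smul_sub]

lemma norm_rsmul_nsmul_le (n : ℕ) (b : A) :
    ‖M.rsmul (σ (n • b))‖ ≤ n * ‖M.rsmul (σ b)‖ := by
  simpa only [map_nsmul, nsmul_eq_mul] using norm_nsmul_le (n := n) (a := M.rsmul (σ b))

lemma norm_lsmul_nsmul_le (n : ℕ) (a : A) :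
    ‖M.lsmul (τ (n • a))‖ ≤ n * ‖M.lsmul (τ a)‖ := by
  simpa only [map_nsmul, nsmul_eq_mul] using norm_nsmul_le (n := n) (a := M.lsmul (τ a))

lemma sigmaTauDefect_eq_zero_of_norm_sub_le {F : Type*} [FunLike F A Y] [AddMonoidHomClass F A Y]
    {D : F} {f : A → Y} {α β : ℝ} (hD : ∀ a, ‖D a - f a‖ ≤ β)
    (hf : ∀ a b, ‖M.sigmaTauDefect σ τ f a b‖ ≤ α) (a b : A) :
    M.sigmaTauDefect σ τ D a b = 0 := by
  set K := ‖M.rsmul (σ b)‖ + ‖M.lsmul (τ a)‖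
  have hα : 0 ≤ α := (norm_nonneg _).trans (hf 0 0)
  have hβ : 0 ≤ β := (norm_nonneg _).trans (hD 0)
  refine norm_le_zero_iff.1 (nonpos_of_forall_nat_mul_le (C := α + β * (1 + K)) fun n hn => ?_)
  have hn1 : (1 : ℝ) ≤ n := by exact_mod_cast hn
  have hscale : ‖M.sigmaTauDefect σ τ D (n • a) (n • b)‖ =
      n * (n * ‖M.sigmaTauDefect σ τ D a b‖) := by
    rw [sigmaTauDefect_nsmul, RCLike.norm_nsmul ℝ, RCLike.norm_nsmul ℝ, nsmul_eq_mul, nsmul_eq_mul]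
  have hsplit : ‖M.sigmaTauDefect σ τ D (n • a) (n • b)‖ ≤ α + β * (1 + n * K) := by
    have hdiff := norm_sigmaTauDefect_le (M := M) (σ := σ) (τ := τ) (g := ⇑D - f) hD (n • a) (n • b)
    rw [sigmaTauDefect_sub] at hdiff
    have hR := mul_le_mul_of_nonneg_right (norm_rsmul_nsmul_le (M := M) (σ := σ) n b) hβ
    have hL := mul_le_mul_of_nonneg_right (norm_lsmul_nsmul_le (M := M) (τ := τ) n a) hβ
    calc _ ≤ ‖M.sigmaTauDefect σ τ f (n • a) (n • b)‖ + ‖M.sigmaTauDefect σ τ D (n • a) (n • b) -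
          M.sigmaTauDefect σ τ f (n • a) (n • b)‖ := norm_le_norm_add_norm_sub' _ _
      _ ≤ α + β * (1 + n * K) := by linarith [hf (n • a) (n • b)]
  have hbound : (n : ℝ) * (n * ‖M.sigmaTauDefect σ τ D a b‖) ≤ n * (α + β * (1 + K)) :=
    calc _ = ‖M.sigmaTauDefect σ τ D (n • a) (n • b)‖ := hscale.symm
      _ ≤ α + β * (1 + n * K) := hsplit
      _ ≤ n * (α + β * (1 + K)) := by nlinarith
  exact le_of_mul_le_mul_left hbound (by positivity)

lemma isApproxSigmaTauDerivation_of_derivation (d : A →L[ℂ] Y)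
    (hd : ∀ a b, d (a * b) = M.rsmul (σ b) (d a) + M.lsmul (τ a) (d b)) :
    IsApproxSigmaTauDerivation M σ τ d :=
  ⟨map_zero d, ⟨0, d.continuous.continuousAt⟩, 1, one_pos, fun l _ a b => by simp,
    fun a b => by simp [hd]⟩

theorem exists_derivation_norm_sub_le {f : A → Y} (hf : IsApproxSigmaTauDerivation M σ τ f) :
    ∃ D : A →L[ℂ] Y, (∀ a b, D (a * b) = M.rsmul (σ b) (D a) + M.lsmul (τ a) (D b)) ∧
      ∃ α, 0 < α ∧ ∀ a, ‖D a - f a‖ ≤ α := by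
  obtain ⟨hf0, ⟨a₀, hcont⟩, α, hα, hadd, hder⟩ := hf
  obtain ⟨D, hD⟩ := exists_continuousLinearMap_norm_sub_le hf0 hcont hadd
  refine ⟨D, fun a b => ?_, α, hα, hD⟩
  exact sigmaTauDefect_eq_zero_iff.1 (sigmaTauDefect_eq_zero_of_norm_sub_le hD hder a b)

end BanachBimodule

theorem approx_sigma_tau_amenable_iff_sigma_tau_amenable_general
    {A : Type*} [NonUnitalNormedRing A] [NormedSpace ℂ A]
    (σ τ : A →L[ℂ] A) :
    (∀ (X : Type) [NormedAddCommGroup X] [NormedSpace ℂ X] [CompleteSpace X]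
      (M : BanachBimodule A X) (f : A → (X →L[ℂ] ℂ)),
      IsApproxSigmaTauDerivation M.dual σ τ f →
      ∃ β : ℝ, 0 < β ∧ ∃ x : X →L[ℂ] ℂ, ∀ a : A,
        ‖M.dual.rsmul (σ a) x - M.dual.lsmul (τ a) x - f a‖ ≤ β) ↔
    (∀ (X : Type) [NormedAddCommGroup X] [NormedSpace ℂ X] [CompleteSpace X]
      (M : BanachBimodule A X) (d : A →L[ℂ] (X →L[ℂ] ℂ)),
      (∀ a b : A, d (a * b) = M.dual.rsmul (σ b) (d a) + M.dual.lsmul (τ a) (d b)) →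
      ∃ x : X →L[ℂ] ℂ, ∀ a : A, d a = M.dual.rsmul (σ a) x - M.dual.lsmul (τ a) x) := by
  constructor
  · intro h X _ _ _ M d hd
    obtain ⟨β, -, x, hx⟩ := h X M d (M.dual.isApproxSigmaTauDerivation_of_derivation d hd)
    have hdx : d = M.dual.innerDerivation σ τ x :=
      eq_of_forall_norm_sub_le fun a => by simpa [norm_sub_rev] using hx a
    exact ⟨x, fun a => by rw [hdx, BanachBimodule.innerDerivation_apply]⟩
  · intro h X _ _ _ M f hf
    obtain ⟨D, hD, α, hα, hDf⟩ := M.dual.exists_derivation_norm_sub_le hf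
    obtain ⟨x, hx⟩ := h X M D hD
    exact ⟨α, hα, x, fun a => hx a ▸ hDf a⟩

/-- Theorem 3.2 of the paper: a complex Banach algebra `A` is approximately
`(σ-τ)`-amenable if and only if it is `(σ-τ)`-amenable.  Amenability is phrased in
terms of derivations into the dual `X* = X →L[ℂ] ℂ` of a Banach `A`-bimodule `X`,
equipped with its canonical dual bimodule structure. -/
theorem approx_sigma_tau_amenable_iff_sigma_tau_amenable
    {A : Type*} [NonUnitalNormedRing A] [NormedSpace ℂ A]
    [IsScalarTower ℂ A A] [SMulCommClass ℂ A A] [CompleteSpace A]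
    (σ τ : A →L[ℂ] A)
    (hσ : ∀ a b : A, σ (a * b) = σ a * σ b) (hτ : ∀ a b : A, τ (a * b) = τ a * τ b) :
    (∀ (X : Type) [NormedAddCommGroup X] [NormedSpace ℂ X] [CompleteSpace X]
      (M : BanachBimodule A X) (f : A → (X →L[ℂ] ℂ)),
      IsApproxSigmaTauDerivation M.dual σ τ f →
      ∃ β : ℝ, 0 < β ∧ ∃ x : X →L[ℂ] ℂ, ∀ a : A,
        ‖M.dual.rsmul (σ a) x - M.dual.lsmul (τ a) x - f a‖ ≤ β) ↔
    (∀ (X : Type) [NormedAddCommGroup X] [NormedSpace ℂ X] [CompleteSpace X]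
      (M : BanachBimodule A X) (d : A →L[ℂ] (X →L[ℂ] ℂ)),
      (∀ a b : A, d (a * b) = M.dual.rsmul (σ b) (d a) + M.dual.lsmul (τ a) (d b)) →
      ∃ x : X →L[ℂ] ℂ, ∀ a : A, d a = M.dual.rsmul (σ a) x - M.dual.lsmul (τ a) x) :=
  approx_sigma_tau_amenable_iff_sigma_tau_amenable_general σ τ
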